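/- Every nonempty closed invariant subset Y₀ ⊆ Y contains τ(u) for some vertex u ∈ E⁰, and for any such u, Y₀ contains τ(w) for every path w ∈ E* with s(w) = u. -/

import Mathlib

/-!
Forward orbits of the odometer maps inside `Y₀` keep appending edges to the word spelled by
the first `N` coordinates, and that word has length `< n N`; so after boundedly many steps a
carry past level `N` occurs, producing a point of `Y₀` whose first `N` coordinates are the
trivial path at some vertex `u`. As `E⁰` is finite one vertex `u` works for all `N`, and these
points converge to `τ(u)`. Moreover `σ_e(τ(w)) = τ(e w)`, because `σ_e(τ(w))` represents
`e w` and representations are unique (the word of the first `j` coordinates is the suffix of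
`w` of length `|w| mod n_j`), so invariance propagates `τ(u)` along every path from `u`.
-/

/-- A directed graph: vertices, edges, source and range maps. -/
structure DirGraph where
  V : Type
  E : Type
  s : E → V
  r : E → V

namespace DirGraph

/-- `G.IsPathFrom x l` : the list of edges `l` (in walking order) forms a
path starting at the vertex `x`. -/
def IsPathFrom (G : DirGraph) : G.V → List G.E → Prop
  | _, [] => True
  | x, e :: es => G.s e = x ∧ G.IsPathFrom (G.r e) es

/-- The vertex reached after walking the edges `l` starting at `x`. -/
def endAt (G : DirGraph) : G.V → List G.E → G.V
  | x, [] => x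
  | _, e :: es => G.endAt (G.r e) es

/-- A finite path in `G`: a source vertex together with a composable list of
edges (in walking order).  Vertices are the paths with no edges. -/
structure Path (G : DirGraph) where
  src : G.V
  edges : List G.E
  valid : G.IsPathFrom src edges

namespace Path

variable {G : DirGraph}

/-- The range (final vertex) of a path. -/
def rng (p : G.Path) : G.V := G.endAt p.src p.edges

/-- The length of a path. -/
def length (p : G.Path) : ℕ := p.edges.length

/-- The trivial path at a vertex. -/
def nil (x : G.V) : G.Path := ⟨x, [], trivial⟩

end Path

variable {G : DirGraph}

theorem isPathFrom_append :
    ∀ (l₁ l₂ : List G.E) (x : G.V), G.IsPathFrom x l₁ →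
      G.IsPathFrom (G.endAt x l₁) l₂ → G.IsPathFrom x (l₁ ++ l₂)
  | [], _, _, _, h₂ => h₂
  | e :: es, l₂, _, h₁, h₂ => ⟨h₁.1, isPathFrom_append es l₂ (G.r e) h₁.2 h₂⟩

theorem endAt_append :
    ∀ (l₁ l₂ : List G.E) (x : G.V), G.endAt x (l₁ ++ l₂) = G.endAt (G.endAt x l₁) l₂
  | [], _, _ => rfl
  | e :: es, l₂, x => endAt_append es l₂ (G.r e)

theorem isPathFrom_take_drop :
    ∀ (l : List G.E) (k : ℕ) (x : G.V), G.IsPathFrom x l →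
      G.IsPathFrom (G.endAt x (l.take k)) (l.drop k)
  | [], k, _, h => by cases k <;> exact h
  | _ :: _, 0, _, h => h
  | e :: es, k + 1, x, h => isPathFrom_take_drop es k (G.r e) h.2

/-- Extend a path by one more edge at its end (`p.cons e` is the path `e·p`). -/
def Path.cons (p : G.Path) (e : G.E) (h : G.s e = p.rng) : G.Path :=
  ⟨p.src, p.edges ++ [e], isPathFrom_append p.edges [e] p.src p.valid ⟨h, trivial⟩⟩

@[simp] theorem Path.cons_length (p : G.Path) (e : G.E) (h : G.s e = p.rng) :
    (p.cons e h).length = p.length + 1 := by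
  simp [Path.cons, Path.length]

/-- The remainder `w(n)` of a path modulo `n`: the final segment of length
`|w| % n` (the part of `w` walked last). -/
def Path.rem (p : G.Path) (n : ℕ) : G.Path :=
  ⟨G.endAt p.src (p.edges.take (p.length - p.length % n)),
   p.edges.drop (p.length - p.length % n),
   isPathFrom_take_drop p.edges _ p.src p.valid⟩

theorem Path.rem_length (p : G.Path) (n : ℕ) : (p.rem n).length = p.length % n := by
  show (p.edges.drop (p.length - p.length % n)).length = _
  rw [List.length_drop]
  exact Nat.sub_sub_self (Nat.mod_le _ _)

theorem Path.rem_rng (p : G.Path) (n : ℕ) : (p.rem n).rng = p.rng := by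
  show G.endAt (G.endAt p.src (p.edges.take (p.length - p.length % n)))
      (p.edges.drop (p.length - p.length % n)) = _
  rw [← endAt_append, List.take_append_drop]
  rfl

/-- The graph `E(n)`: vertices are paths of length `< n` in `G`, edges are
pairs `(e, w)` with `s(e) = r(w)`; `s(e,w) = w` and `r(e,w) = ew` if
`|w| < n - 1`, and `r(e,w) = r(e)` if `|w| = n - 1`. -/
def graphN (G : DirGraph) (n : ℕ) : DirGraph where
  V := {w : G.Path // w.length < n}
  E := {p : G.E × G.Path // p.2.length < n ∧ G.s p.1 = p.2.rng}
  s := fun f => ⟨f.val.2, f.prop.1⟩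
  r := fun f =>
    if h : f.val.2.length + 1 < n then
      ⟨f.val.2.cons f.val.1 f.prop.2, by simpa using h⟩
    else
      ⟨Path.nil (G.r f.val.1), by
        have := f.prop.1
        simp only [Path.nil, Path.length, List.length_nil]
        omega⟩

/-- A factor map between (finite) directed graphs. -/
structure FactorMap (F E : DirGraph) where
  m0 : F.V → E.V
  m1 : F.E → E.E
  src_eq : ∀ f, E.s (m1 f) = m0 (F.s f)
  rng_eq : ∀ f, E.r (m1 f) = m0 (F.r f)
  lift : ∀ (e' : E.E) (v : F.V), E.s e' = m0 v →
    ∃! f : F.E, m1 f = e' ∧ F.s f = v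

/-- The simple loop (cycle) digraph with `j` vertices. -/
def cyc (j : ℕ) : DirGraph where
  V := ZMod j
  E := ZMod j
  s := id
  r := fun i => i + 1

end DirGraph

namespace DirGraph

/-- `Xc G n i` is the (discrete) space `X_{i+1}` of paths in `G` of length
`< n (i+1)` whose length is divisible by `n i`. -/
abbrev Xc (G : DirGraph) (n : ℕ → ℕ) (i : ℕ) : Type :=
  {w : G.Path // w.length < n (i + 1) ∧ n i ∣ w.length}

instance (G : DirGraph) (n : ℕ → ℕ) (i : ℕ) : TopologicalSpace (Xc G n i) := ⊥

instance (G : DirGraph) (n : ℕ → ℕ) (i : ℕ) : DiscreteTopology (Xc G n i) := ⟨rfl⟩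

/-- `Yt G n` is the `{n_k}`-compactification `Y` of `E*`: the composable
sequences in `Π_i X_i`, with the product topology (each `X_i` discrete). -/
abbrev Yt (G : DirGraph) (n : ℕ → ℕ) : Type :=
  {y : ∀ i, Xc G n i // ∀ i, (y i).val.src = (y (i + 1)).val.rng}

/-- The `i`-th coordinate path of an element of `Y`. -/
def yc {G : DirGraph} {n : ℕ → ℕ} (y : Yt G n) (i : ℕ) : G.Path := (y.val i).val

/-- The domain `D_e = { y ∈ Y : r(y₁) = s(e) }` of the odometer map `σ_e`. -/
def De (G : DirGraph) (n : ℕ → ℕ) (e : G.E) : Set (Yt G n) :=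
  {y | (yc y 0).rng = G.s e}

/-- `Represents G n w y` says that `y ∈ Y` is the image `τ(w)` of the path
`w` under the canonical embedding: from some index `k` on the coordinates are
the trivial path at `s(w)`, and `w` is the concatenation `w₁ w₂ ⋯ w_k` of the
first `k` coordinates (the `k`-th walked first). -/
def Represents (G : DirGraph) (n : ℕ → ℕ) (w : G.Path) (y : Yt G n) : Prop :=
  ∃ k : ℕ,
    (∀ i, k ≤ i → (yc y i).edges = [] ∧ (yc y i).src = w.src) ∧
    w.edges = (((List.range k).map fun i => (yc y i).edges).reverse).flatten

/-- `Carry G n e y z i0` : `z = σ_e(y)` where `i0 = i(y) < ∞` is the least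
index with `|y_{i0}| < n_{i0+1} - n_{i0}`: the coordinates below `i0` of `z`
are the trivial path at `r(e)`, the `i0`-th is `e y₀ y₁ ⋯ y_{i0}`, and the
coordinates above `i0` are unchanged. -/
def Carry (G : DirGraph) (n : ℕ → ℕ) (e : G.E) (y z : Yt G n) (i0 : ℕ) : Prop :=
  (yc y i0).length < n (i0 + 1) - n i0 ∧
  (∀ i < i0, ¬ (yc y i).length < n (i + 1) - n i) ∧
  (∀ i < i0, (yc z i).edges = [] ∧ (yc z i).src = G.r e) ∧
  (yc z i0).src = (yc y i0).src ∧
  (yc z i0).edges =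
    (yc y i0).edges ++ (((List.range i0).map fun i => (yc y i).edges).reverse).flatten
      ++ [e] ∧
  ∀ i, i0 < i → yc z i = yc y i

/-- `OdRel G n e y z` : `z = σ_e(y)`, the graph of the odometer map `σ_e`:
either there is a least index `i0 = i(y)` and a carry happens there, or all
coordinates of `y` are maximal and `z = (r(e), r(e), …)`. -/
def OdRel (G : DirGraph) (n : ℕ → ℕ) (e : G.E) (y z : Yt G n) : Prop :=
  (∃ i0, Carry G n e y z i0) ∨
  ((∀ i, ¬ (yc y i).length < n (i + 1) - n i) ∧
    ∀ i, (yc z i).edges = [] ∧ (yc z i).src = G.r e)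

/-- A subset `B ⊆ Y` is invariant for the odometer maps `σ`. -/
def Invariant (G : DirGraph) (n : ℕ → ℕ) (σ : G.E → Yt G n → Yt G n)
    (B : Set (Yt G n)) : Prop :=
  (∀ e : G.E, ∀ y ∈ B ∩ De G n e, σ e y ∈ B) ∧
  (∀ y : Yt G n, (∃ f : G.E, ∃ z ∈ De G n f ∩ B, σ f z = y) → y ∈ B)

end DirGraph

theorem Nat.add_le_of_dvd_of_lt {d a b : ℕ} (ha : d ∣ a) (hb : d ∣ b) (hab : a < b) :
    a + d ≤ b := by
  obtain ⟨p, rfl⟩ := ha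
  obtain ⟨q, rfl⟩ := hb
  have hpq : p + 1 ≤ q := Nat.lt_of_mul_lt_mul_left hab
  simpa [Nat.mul_succ] using Nat.mul_le_mul_left d hpq

namespace DirGraph

variable {G : DirGraph} {n : ℕ → ℕ}

theorem Path.ext {p q : G.Path} (hsrc : p.src = q.src) (hedges : p.edges = q.edges) :
    p = q := by
  cases p; cases q; cases hsrc; cases hedges; rfl

theorem Path.eq_nil_iff {p : G.Path} {u : G.V} : p = Path.nil u ↔ p.edges = [] ∧ p.src = u :=
  ⟨fun h => h ▸ ⟨rfl, rfl⟩, fun h => Path.ext h.2 h.1⟩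

theorem Path.rng_of_edges_eq_nil {p : G.Path} (h : p.edges = []) : p.rng = p.src := by
  rw [Path.rng, h]; rfl

theorem isPathFrom_append_iff (l₁ l₂ : List G.E) (x : G.V) :
    G.IsPathFrom x (l₁ ++ l₂) ↔ G.IsPathFrom x l₁ ∧ G.IsPathFrom (G.endAt x l₁) l₂ := by
  induction l₁ generalizing x with
  | nil => exact ⟨fun h => ⟨trivial, h⟩, And.right⟩
  | cons e es ih => exact (and_congr_right fun _ => ih (G.r e)).trans and_assoc.symm

theorem Path.induction_cons {motive : G.Path → Prop} (nil : ∀ u, motive (Path.nil u))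
    (cons : ∀ p e (h : G.s e = p.rng), motive p → motive (p.cons e h)) (p : G.Path) :
    motive p := by
  obtain ⟨u, l, hl⟩ := p
  induction l using List.reverseRecOn with
  | nil => exact nil u
  | append_singleton l e ih =>
    obtain ⟨hl, he, -⟩ := (isPathFrom_append_iff l [e] u).1 hl
    exact cons ⟨u, l, hl⟩ e he (ih hl)

theorem src_yc (y : Yt G n) (i : ℕ) : (yc y i).src = (yc y (i + 1)).rng :=
  y.prop i

theorem Yt.ext {y y' : Yt G n} (h : ∀ i, yc y i = yc y' i) : y = y' :=
  Subtype.ext (funext fun i => Subtype.ext (h i))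

/-- The word spelled by the first `j` coordinates, `y_{j-1}` walked first. -/
def word (y : Yt G n) (j : ℕ) : List G.E :=
  (((List.range j).map fun i => (yc y i).edges).reverse).flatten

@[simp] theorem word_zero (y : Yt G n) : word y 0 = [] := rfl

theorem word_succ (y : Yt G n) (j : ℕ) : word y (j + 1) = (yc y j).edges ++ word y j := by
  simp [word, List.range_succ]

theorem word_eq_nil_iff (y : Yt G n) (j : ℕ) :
    word y j = [] ↔ ∀ i < j, (yc y i).edges = [] := by
  simp [word, List.flatten_eq_nil_iff]

theorem word_suffix_of_le (y : Yt G n) {j m : ℕ} (hjm : j ≤ m) : word y j <:+ word y m := by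
  induction m, hjm using Nat.le_induction with
  | base => exact List.suffix_refl _
  | succ m _ ih => exact ih.trans (word_succ y m ▸ List.suffix_append _ _)

theorem word_eq_of_forall_ge (y : Yt G n) {k : ℕ} (h : ∀ i, k ≤ i → (yc y i).edges = [])
    {j : ℕ} (hkj : k ≤ j) : word y j = word y k := by
  induction j, hkj using Nat.le_induction with
  | base => rfl
  | succ j hkj ih => rw [word_succ, h j hkj, List.nil_append, ih]

theorem endAt_rng_word (y : Yt G n) (m : ℕ) : G.endAt (yc y m).rng (word y m) = (yc y 0).rng := by
  induction m with
  | zero => rfl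
  | succ m ih => rw [word_succ, endAt_append, ← src_yc, ← Path.rng, ih]

theorem length_word_lt (h0 : n 0 = 1) (hdvd : ∀ i, n i ∣ n (i + 1)) (y : Yt G n) (j : ℕ) :
    (word y j).length < n j := by
  induction j with
  | zero => simp [h0]
  | succ j ih =>
    have hcoord : (yc y j).length + n j ≤ n (j + 1) :=
      Nat.add_le_of_dvd_of_lt (y.val j).prop.2 (hdvd j) (y.val j).prop.1
    have hlen : (word y (j + 1)).length = (yc y j).length + (word y j).length := by
      rw [word_succ, List.length_append]; rfl
    omega

/-- Coordinates at levels `≥ j` have lengths divisible by `n j`. -/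
theorem length_word_mod (h0 : n 0 = 1) (hdvd : ∀ i, n i ∣ n (i + 1)) (y : Yt G n)
    {j m : ℕ} (hjm : j ≤ m) : (word y m).length % n j = (word y j).length := by
  induction m, hjm using Nat.le_induction with
  | base => exact Nat.mod_eq_of_lt (length_word_lt h0 hdvd y j)
  | succ m hjm ih =>
    obtain ⟨c, hc⟩ := (Nat.rel_of_forall_rel_succ_of_le (· ∣ ·) hdvd hjm).trans (y.val m).prop.2
    have hlen : (yc y m).edges.length = n j * c := hc
    rw [word_succ, List.length_append, hlen, add_comm, Nat.add_mul_mod_self_left, ih]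

namespace Represents

variable {w : G.Path} {y y' : Yt G n}

theorem word_eq (hw : Represents G n w y) : ∃ k, ∀ j, k ≤ j → word y j = w.edges := by
  obtain ⟨k, hk, hwk : w.edges = word y k⟩ := hw
  exact ⟨k, fun j hkj => (word_eq_of_forall_ge y (fun i hi => (hk i hi).1) hkj).trans hwk.symm⟩

theorem word_eq_rem (h0 : n 0 = 1) (hdvd : ∀ i, n i ∣ n (i + 1))
    (hw : Represents G n w y) (j : ℕ) : word y j = (w.rem (n j)).edges := by
  obtain ⟨k, hk⟩ := hw.word_eq
  have hm := hk (max j k) (le_max_right j k)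
  have hsuffix := word_suffix_of_le y (le_max_left j k)
  have hlen := length_word_mod h0 hdvd y (le_max_left j k)
  rw [hm] at hsuffix hlen
  rw [List.suffix_iff_eq_drop.1 hsuffix, ← hlen]
  rfl

theorem unique (h0 : n 0 = 1) (hdvd : ∀ i, n i ∣ n (i + 1))
    (hy : Represents G n w y) (hy' : Represents G n w y') : y = y' := by
  have hword : ∀ j, word y j = word y' j := fun j =>
    (hy.word_eq_rem h0 hdvd j).trans (hy'.word_eq_rem h0 hdvd j).symm
  have hedges : ∀ i, (yc y i).edges = (yc y' i).edges := fun i => by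
    have h := (word_succ y i).symm.trans ((hword (i + 1)).trans (word_succ y' i))
    rw [← hword i] at h
    exact List.append_cancel_right h
  obtain ⟨k, hk, -⟩ := hy
  obtain ⟨k', hk', -⟩ := hy'
  have hsrc_ge : ∀ i, max k k' ≤ i → (yc y i).src = (yc y' i).src := fun i hi =>
    (hk i ((le_max_left k k').trans hi)).2.trans (hk' i ((le_max_right k k').trans hi)).2.symm
  have hsrc : ∀ i, (yc y i).src = (yc y' i).src := by
    intro i
    rcases le_total i (max k k') with hi | hi
    · refine Nat.decreasingInduction (fun i _ ih => ?_) (hsrc_ge _ le_rfl) hi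
      rw [src_yc, src_yc, Path.rng, Path.rng, ih, hedges]
    · exact hsrc_ge i hi
  exact Yt.ext fun i => Path.ext (hsrc i) (hedges i)

theorem yc_eq_nil {u : G.V} (hy : Represents G n (Path.nil u) y) (i : ℕ) :
    yc y i = Path.nil u := by
  obtain ⟨k, hk, hword⟩ := hy
  have hedges : ∀ i, (yc y i).edges = [] := fun i =>
    (lt_or_ge i k).elim ((word_eq_nil_iff y k).1 hword.symm i) fun hi => (hk i hi).1
  refine Path.eq_nil_iff.2 ⟨hedges i, ?_⟩
  rcases le_total i k with hi | hi
  · refine Nat.decreasingInduction (fun i _ ih => ?_) (hk k le_rfl).2 hi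
    rw [src_yc, Path.rng_of_edges_eq_nil (hedges _), ih]
  · exact (hk i hi).2

theorem rng_yc_zero (hw : Represents G n w y) : (yc y 0).rng = w.rng := by
  obtain ⟨k, hk, hword : w.edges = word y k⟩ := hw
  rw [← endAt_rng_word y k, Path.rng_of_edges_eq_nil (hk k le_rfl).1, (hk k le_rfl).2,
    ← hword]
  rfl

end Represents

theorem Carry.word_eq {e : G.E} {y z : Yt G n} {i0 : ℕ} (hc : Carry G n e y z i0) {m : ℕ}
    (hm : i0 + 1 ≤ m) : word z m = word y m ++ [e] := by
  obtain ⟨-, -, hbelow, -, hcarry, habove⟩ := hc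
  induction m, hm using Nat.le_induction with
  | base =>
    have hz : word z i0 = [] := (word_eq_nil_iff z i0).2 fun i hi => (hbelow i hi).1
    rw [word_succ, word_succ, hz, List.append_nil, hcarry]
    rfl
  | succ m hm ih => rw [word_succ, word_succ, habove m hm, ih, List.append_assoc]

theorem Represents.odRel_cons (hmono : StrictMono n) {w : G.Path} {y z : Yt G n} {e : G.E}
    (h : G.s e = w.rng) (hw : Represents G n w y) (hod : OdRel G n e y z) :
    Represents G n (w.cons e h) z := by
  obtain ⟨k, hk, hword : w.edges = word y k⟩ := hw
  rcases hod with ⟨i0, hc⟩ | ⟨hmax, -⟩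
  · refine ⟨max k (i0 + 1), fun i hi => ?_, ?_⟩
    · rw [hc.2.2.2.2.2 i (by omega)]
      exact hk i ((le_max_left _ _).trans hi)
    · change w.edges ++ [e] = word z (max k (i0 + 1))
      rw [hc.word_eq (le_max_right _ _), word_eq_of_forall_ge y (fun i hi => (hk i hi).1)
        (le_max_left _ _), ← hword]
  · have hlen : (yc y k).length = 0 := List.length_eq_zero_iff.2 (hk k le_rfl).1
    exact (hmax k (hlen ▸ Nat.sub_pos_of_lt (hmono (Nat.lt_succ_self k)))).elim

theorem OdRel.word_eq_or {e : G.E} {y z : Yt G n} (hod : OdRel G n e y z) (N : ℕ) :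
    word z N = word y N ++ [e] ∨ ∃ u, ∀ i < N, yc z i = Path.nil u := by
  rcases hod with ⟨i0, hc⟩ | ⟨-, hz⟩
  · rcases lt_or_ge i0 N with hN | hN
    · exact .inl (hc.word_eq hN)
    · exact .inr ⟨G.r e, fun i hi => Path.eq_nil_iff.2 (hc.2.2.1 i (by omega))⟩
  · exact .inr ⟨G.r e, fun i _ => Path.eq_nil_iff.2 (hz i)⟩

theorem exists_mem_forall_lt_yc_eq_nil (h0 : n 0 = 1) (hdvd : ∀ i, n i ∣ n (i + 1))
    {Y₀ : Set (Yt G n)} (hne : Y₀.Nonempty) (hstep : ∀ y ∈ Y₀, ∃ e, ∃ z ∈ Y₀, OdRel G n e y z)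
    (N : ℕ) : ∃ u, ∃ y ∈ Y₀, ∀ i < N, yc y i = Path.nil u := by
  by_contra! hnone
  have hlong : ∀ m, ∃ y ∈ Y₀, m ≤ (word y N).length := by
    intro m
    induction m with
    | zero => exact hne.imp fun y hy => ⟨hy, Nat.zero_le _⟩
    | succ m ih =>
      obtain ⟨y, hy, hmy⟩ := ih
      obtain ⟨e, z, hz, hod⟩ := hstep y hy
      rcases hod.word_eq_or N with hword | ⟨u, hu⟩
      · exact ⟨z, hz, by rw [hword, List.length_append, List.length_singleton]; omega⟩
      · obtain ⟨i, hi, hzu⟩ := hnone u z hz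
        exact absurd (hu i hi) hzu
  obtain ⟨y, -, hy⟩ := hlong (n N)
  exact absurd (length_word_lt h0 hdvd y N) (not_lt.2 hy)

end DirGraph

theorem Finite.exists_forall_of_antitone {α : Type*} [Finite α] {P : α → ℕ → Prop}
    (hP : ∀ a, Antitone (P a)) (h : ∀ N, ∃ a, P a N) : ∃ a, ∀ N, P a N := by
  by_contra! hnot
  choose N hN using hnot
  obtain ⟨M, hM⟩ := Finite.exists_le N
  obtain ⟨a, ha⟩ := h M
  exact hN a (hP a (hM a) ha)

theorem mem_closure_of_forall_exists_eqOn_lt {X : ℕ → Type*} [∀ i, TopologicalSpace (X i)]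
    [∀ i, DiscreteTopology (X i)] {p : (∀ i, X i) → Prop} {s : Set (Subtype p)}
    {x : Subtype p} (h : ∀ N, ∃ y ∈ s, ∀ i < N, y.val i = x.val i) : x ∈ closure s := by
  choose y hys hyx using h
  refine mem_closure_of_tendsto (f := y) (b := Filter.atTop) ?_ (.of_forall hys)
  rw [tendsto_subtype_rng, tendsto_pi_nhds]
  intro i
  rw [nhds_discrete, Filter.tendsto_pure]
  filter_upwards [Filter.eventually_gt_atTop i] with N hN using hyx N i hN

open DirGraph in
theorem stmt18_general (G : DirGraph) [Fintype G.V]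
    (hnosink : ∀ v : G.V, ∃ e : G.E, G.s e = v)
    (n : ℕ → ℕ) (h0 : n 0 = 1) (hmono : StrictMono n) (hdvd : ∀ i, n i ∣ n (i + 1))
    (τ : G.Path → Yt G n) (hτ : ∀ w, Represents G n w (τ w))
    (σ : G.E → Yt G n → Yt G n)
    (hσ : ∀ (e : G.E), ∀ y ∈ De G n e, OdRel G n e y (σ e y))
    (Y₀ : Set (Yt G n)) (hclosed : IsClosed Y₀) (hinv : Invariant G n σ Y₀)
    (hne : Y₀.Nonempty) :
    (∃ u : G.V, τ (Path.nil u) ∈ Y₀) ∧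
    ∀ u : G.V, τ (Path.nil u) ∈ Y₀ →
      ∀ w : G.Path, w.src = u → τ w ∈ Y₀ := by
  constructor
  · have hstep : ∀ y ∈ Y₀, ∃ e, ∃ z ∈ Y₀, OdRel G n e y z := fun y hy => by
      obtain ⟨e, he⟩ := hnosink (yc y 0).rng
      exact ⟨e, σ e y, hinv.1 e y ⟨hy, he.symm⟩, hσ e y he.symm⟩
    obtain ⟨u, hu⟩ := Finite.exists_forall_of_antitone
      (fun u N N' hNN' ⟨y, hy, hyu⟩ => ⟨y, hy, fun i hi => hyu i (hi.trans_le hNN')⟩)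
      (exists_mem_forall_lt_yc_eq_nil h0 hdvd hne hstep)
    refine ⟨u, hclosed.closure_subset (mem_closure_of_forall_exists_eqOn_lt fun N => ?_)⟩
    obtain ⟨y, hy, hyu⟩ := hu N
    exact ⟨y, hy, fun i hi => Subtype.ext ((hyu i hi).trans ((hτ _).yc_eq_nil i).symm)⟩
  · rintro u hu w rfl
    induction w using Path.induction_cons with
    | nil v => exact hu
    | cons p e he ih =>
      have hDe : τ p ∈ De G n e := ((hτ p).rng_yc_zero).trans he.symm
      have hcons := (hτ p).odRel_cons hmono he (hσ e (τ p) hDe)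
      rw [(hτ _).unique h0 hdvd hcons]
      exact hinv.1 e (τ p) ⟨ih hu, hDe⟩

open DirGraph in
/-- Every nonempty closed invariant subset `Y₀ ⊆ Y`
contains `τ(u) = (u, u, …)` for some vertex `u`, and for any such `u` it
contains `τ(w)` for every path `w` with `s(w) = u`. -/
theorem stmt18 (G : DirGraph) [Fintype G.V] [Fintype G.E]
    (hnosource : ∀ v : G.V, ∃ e : G.E, G.r e = v)
    (hnosink : ∀ v : G.V, ∃ e : G.E, G.s e = v)
    (n : ℕ → ℕ) (h0 : n 0 = 1) (hmono : StrictMono n) (hdvd : ∀ i, n i ∣ n (i + 1))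
    (τ : G.Path → Yt G n) (hτ : ∀ w, Represents G n w (τ w))
    (σ : G.E → Yt G n → Yt G n)
    (hσ : ∀ (e : G.E), ∀ y ∈ De G n e, OdRel G n e y (σ e y))
    (Y₀ : Set (Yt G n)) (hclosed : IsClosed Y₀) (hinv : Invariant G n σ Y₀)
    (hne : Y₀.Nonempty) :
    (∃ u : G.V, τ (Path.nil u) ∈ Y₀) ∧
    ∀ u : G.V, τ (Path.nil u) ∈ Y₀ →
      ∀ w : G.Path, w.src = u → τ w ∈ Y₀ :=
  stmt18_general G hnosink n h0 hmono hdvd τ hτ σ hσ Y₀ hclosed hinv hne
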